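/- The intersection of any family of tropically convex subsets of 𝕋±^d is tropically convex, and the image of a tropically convex subset of 𝕋±^d under a coordinate projection (deleting one coordinate) is a tropically convex subset of 𝕋±^{d−1}. -/

import Mathlib

/-!  Signed tropical numbers 𝕋±, the symmetrized tropical semiring 𝕊,
     and signed tropical convexity (Loho–Végh). -/

inductive SSign : Type where
  | pos : SSign
  | neg : SSign
  | bal : SSign
deriving DecidableEq

/-- The symmetrized tropical semiring 𝕊: the tropical zero 𝟘 = -∞ together with
elements `elem s r` where `s` is a sign (⊕, ⊖ or •) and `r` a real number. -/
inductive STrop : Type where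
  | zero : STrop
  | elem : SSign → ℝ → STrop

namespace STrop

/-- membership in the signed tropical numbers 𝕋± (i.e. not balanced-nonzero). -/
def isSigned : STrop → Prop
  | elem SSign.bal _ => False
  | _ => True

/-- membership in 𝕋≥, the nonnegative tropical numbers. -/
def nneg : STrop → Prop
  | zero => True
  | elem SSign.pos _ => True
  | _ => False

/-- membership in 𝕋≤, the nonpositive tropical numbers. -/
def npos : STrop → Prop
  | zero => True
  | elem SSign.neg _ => True
  | _ => False

/-- strictly positive signed element (sign ⊕, not 𝟘). -/
def isPos : STrop → Prop
  | elem SSign.pos _ => True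
  | _ => False

/-- balanced or 𝟘 (membership in 𝕋•). -/
def balZero : STrop → Prop
  | zero => True
  | elem SSign.bal _ => True
  | _ => False

/-- the negation map ⊖. -/
def neg : STrop → STrop
  | zero => zero
  | elem SSign.pos r => elem SSign.neg r
  | elem SSign.neg r => elem SSign.pos r
  | elem SSign.bal r => elem SSign.bal r

/-- tropical addition ⊕ on 𝕊. -/
noncomputable def add : STrop → STrop → STrop
  | zero, y => y
  | x, zero => x
  | elem s r, elem t u =>
    if r < u then elem t u
    else if u < r then elem s r
    else if s = t then elem s r
    else elem SSign.bal r

def signMul : SSign → SSign → SSign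
  | SSign.pos, t => t
  | SSign.neg, SSign.pos => SSign.neg
  | SSign.neg, SSign.neg => SSign.pos
  | SSign.neg, SSign.bal => SSign.bal
  | SSign.bal, _ => SSign.bal

/-- tropical multiplication ⊙ on 𝕊. -/
def mul : STrop → STrop → STrop
  | zero, _ => zero
  | _, zero => zero
  | elem s r, elem t u => elem (signMul s t) (r + u)

/-- a ⊖ b := a ⊕ (⊖b). -/
noncomputable def sub (x y : STrop) : STrop := add x (neg y)

/-- the tropical one, the signed element ⊕0. -/
def one : STrop := elem SSign.pos 0

/-- the absolute value |·| : 𝕊 → 𝕋≥. -/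
def absS : STrop → STrop
  | zero => zero
  | elem _ r => elem SSign.pos r

/-- strict order: x > y iff x ⊖ y is a strictly positive signed element. -/
def sgt (x y : STrop) : Prop := isPos (sub x y)

/-- balance relation: x ⋈ y iff x ⊖ y is balanced or 𝟘. -/
def bal (x y : STrop) : Prop := balZero (sub x y)

/-- the relation ⊵ : x ⊵ y iff x > y or x ⋈ y. -/
def teq (x y : STrop) : Prop := sgt x y ∨ bal x y

/-- the total order ≤ on the signed tropical numbers 𝕋±
(arbitrarily `False` whenever a balanced element is involved). -/
def sle : STrop → STrop → Prop
  | zero, zero => True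
  | zero, elem SSign.pos _ => True
  | elem SSign.neg _, zero => True
  | elem SSign.neg _, elem SSign.pos _ => True
  | elem SSign.pos r, elem SSign.pos u => r ≤ u
  | elem SSign.neg r, elem SSign.neg u => u ≤ r
  | _, _ => False

/-- U(a): the set of signed numbers incomparable with a; the singleton {a}
for signed a, and the order interval [⊖|a|, |a|] for balanced a. -/
def U : STrop → Set STrop
  | elem SSign.bal r => {x | isSigned x ∧ sle (elem SSign.neg r) x ∧ sle x (elem SSign.pos r)}
  | a => {a}

/-- tropical sum of finitely many elements of 𝕊. -/
noncomputable def sumFin : ∀ {n : ℕ}, (Fin n → STrop) → STrop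
  | 0, _ => zero
  | _ + 1, f => add (f 0) (sumFin fun i => f i.succ)

/-- matrix–vector product A ⊙ x over 𝕊. -/
noncomputable def mv {d n : ℕ} (A : Fin d → Fin n → STrop) (x : Fin n → STrop) : Fin d → STrop :=
  fun i => sumFin fun j => mul (A i j) (x j)

/-- vectors in 𝕋±^d. -/
def isSignedVec {d : ℕ} (v : Fin d → STrop) : Prop := ∀ i, isSigned (v i)

/-- the signed tropical convex hull of the columns of a matrix A:
tconv(A) = {z ∈ 𝕋±^d : z ⋈ A⊙x for some x ∈ 𝕋≥^n with ⊕_j x_j = 0}. -/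
def tconv {d n : ℕ} (A : Fin d → Fin n → STrop) : Set (Fin d → STrop) :=
  {z | isSignedVec z ∧ ∃ x : Fin n → STrop,
    (∀ j, nneg (x j)) ∧ sumFin x = one ∧ ∀ i, bal (z i) (mv A x i)}

/-- the signed tropical convex hull of an arbitrary set: the union of the hulls
of all finite collections of points of M. -/
def tconvSet {d : ℕ} (M : Set (Fin d → STrop)) : Set (Fin d → STrop) :=
  ⋃ (n : ℕ) (A : Fin d → Fin n → STrop) (_ : ∀ j, (fun i => A i j) ∈ M), tconv A

/-- a set M ⊆ 𝕋±^d is tropically convex iff M = tconv(M). -/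
def TropConvex {d : ℕ} (M : Set (Fin d → STrop)) : Prop := M = tconvSet M

/-- evaluation a ⊙ (0, x₁, …, x_d)ᵀ of an affine functional. -/
noncomputable def affEval {d : ℕ} (a : Fin (d + 1) → STrop) (x : Fin d → STrop) : STrop :=
  sumFin fun j => mul (a j) ((Fin.cons one x : Fin (d + 1) → STrop) j)

/-- the open signed tropical halfspace H⁺(a) = {x ∈ 𝕋±^d : a⊙(0,x)ᵀ > 𝟘}. -/
def Hopen {d : ℕ} (a : Fin (d + 1) → STrop) : Set (Fin d → STrop) :=
  {x | isSignedVec x ∧ sgt (affEval a x) zero}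

/-- the closed signed tropical halfspace H̄⁺(a) = {x ∈ 𝕋±^d : a⊙(0,x)ᵀ ⊵ 𝟘}. -/
def Hclosed {d : ℕ} (a : Fin (d + 1) → STrop) : Set (Fin d → STrop) :=
  {x | isSignedVec x ∧ teq (affEval a x) zero}

/-- the non-negative kernel nnker(A). -/
def nnker {d n : ℕ} (A : Fin d → Fin n → STrop) : Set (Fin n → STrop) :=
  {x | (∀ j, nneg (x j)) ∧ x ≠ (fun _ => zero) ∧ ∀ i, balZero (mv A x i)}

/-- the open tropical cone sep(A) = {y ∈ 𝕋±^d : yᵀ⊙A > 𝟘 componentwise}. -/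
def sep {d : ℕ} {J : Type} (A : Fin d → J → STrop) : Set (Fin d → STrop) :=
  {y | isSignedVec y ∧ ∀ j, isPos (sumFin fun i => mul (y i) (A i j))}

end STrop

/-!
The hull operator `tconvSet` is monotone and every point of a hull is signed, so the hull of an
intersection lies in the hull of each member, i.e. in the member itself.

For a projection, a point `z` of the hull of projected columns is `z ⋈ B ⊙ x`. Lift the columns
of `B` to points of `M`, forming a matrix `A`, and keep the coefficients `x`. The missing
coordinate of the lift of `z` can be any signed element balancing `(A ⊙ x)_k`, and such an element
always exists. The lift then lies in `tconv A ⊆ M`.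
-/

namespace STrop

protected lemma add_zero : ∀ x : STrop, add x zero = x
  | zero => rfl
  | elem _ _ => rfl

protected lemma mul_one : ∀ x : STrop, mul x one = x
  | zero => rfl
  | elem s r => by cases s <;> simp [mul, one, signMul]

lemma sumFin_fin_one (f : Fin 1 → STrop) : sumFin f = f 0 := STrop.add_zero (f 0)

lemma bal_self_of_isSigned : ∀ x : STrop, isSigned x → bal x x
  | zero, _ => trivial
  | elem SSign.pos r, _ => by simp [bal, sub, neg, add, balZero]
  | elem SSign.neg r, _ => by simp [bal, sub, neg, add, balZero]
  | elem SSign.bal _, h => h.elim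

lemma exists_isSigned_bal : ∀ x : STrop, ∃ y, isSigned y ∧ bal y x
  | zero => ⟨zero, trivial, trivial⟩
  | elem SSign.pos r => ⟨elem SSign.pos r, trivial, by simp [bal, sub, neg, add, balZero]⟩
  | elem SSign.neg r => ⟨elem SSign.neg r, trivial, by simp [bal, sub, neg, add, balZero]⟩
  | elem SSign.bal r => ⟨elem SSign.pos r, trivial, by simp [bal, sub, neg, add, balZero]⟩

variable {d : ℕ}

lemma mem_tconv_column {v : Fin d → STrop} (hv : isSignedVec v) :
    v ∈ tconv (fun i (_ : Fin 1) => v i) := by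
  refine ⟨hv, fun _ => one, fun _ => trivial, sumFin_fin_one _, fun i => ?_⟩
  have hmv : mv (fun i (_ : Fin 1) => v i) (fun _ => one) i = v i := by
    rw [mv, sumFin_fin_one, STrop.mul_one]
  rw [hmv]
  exact bal_self_of_isSigned _ (hv i)

lemma mem_tconvSet {M : Set (Fin d → STrop)} {z : Fin d → STrop} :
    z ∈ tconvSet M ↔ ∃ n, ∃ A : Fin d → Fin n → STrop,
      (∀ j, (fun i => A i j) ∈ M) ∧ z ∈ tconv A := by
  simp only [tconvSet, Set.mem_iUnion, exists_prop]

lemma tconvSet_mono {M N : Set (Fin d → STrop)} (h : M ⊆ N) : tconvSet M ⊆ tconvSet N := by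
  intro z hz
  obtain ⟨n, A, hA, hz⟩ := mem_tconvSet.mp hz
  exact mem_tconvSet.mpr ⟨n, A, fun j => h (hA j), hz⟩

lemma isSignedVec_of_mem_tconvSet {M : Set (Fin d → STrop)} {z : Fin d → STrop}
    (hz : z ∈ tconvSet M) : isSignedVec z := by
  obtain ⟨_, _, _, hz⟩ := mem_tconvSet.mp hz
  exact hz.1

lemma subset_tconvSet {M : Set (Fin d → STrop)} (hM : ∀ v ∈ M, isSignedVec v) :
    M ⊆ tconvSet M :=
  fun v hv => mem_tconvSet.mpr ⟨1, fun i _ => v i, fun _ => hv, mem_tconv_column (hM v hv)⟩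

lemma tropConvex_iff {M : Set (Fin d → STrop)} :
    TropConvex M ↔ (∀ v ∈ M, isSignedVec v) ∧ tconvSet M ⊆ M := by
  refine ⟨fun hM => ⟨fun v hv => ?_, hM.symm.subset⟩,
    fun ⟨hsig, hsub⟩ => (subset_tconvSet hsig).antisymm hsub⟩
  rw [hM] at hv
  exact isSignedVec_of_mem_tconvSet hv

lemma exists_insertNth_mem_tconv {n : ℕ} {A : Fin (d + 1) → Fin n → STrop} (k : Fin (d + 1))
    {z : Fin d → STrop} (hz : z ∈ tconv fun i => A (k.succAbove i)) :
    ∃ a, Fin.insertNth (α := fun _ => STrop) k a z ∈ tconv A := by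
  obtain ⟨hzs, x, hx, hsum, hbal⟩ := hz
  obtain ⟨a, has, hab⟩ := exists_isSigned_bal (mv A x k)
  refine ⟨a, ⟨fun i => ?_, x, hx, hsum, fun i => ?_⟩⟩
  · induction i using k.succAboveCases with
    | x => simpa only [Fin.insertNth_apply_same] using has
    | p j => simpa only [Fin.insertNth_apply_succAbove] using hzs j
  · induction i using k.succAboveCases with
    | x => simpa only [Fin.insertNth_apply_same] using hab
    | p j =>
      rw [Fin.insertNth_apply_succAbove]
      exact hbal j

theorem TropConvex.iInter {ι : Type*} {F : ι → Set (Fin d → STrop)}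
    (hF : ∀ i, TropConvex (F i)) : TropConvex {v | isSignedVec v ∧ ∀ i, v ∈ F i} := by
  refine tropConvex_iff.mpr ⟨fun v hv => hv.1, fun z hz => ⟨isSignedVec_of_mem_tconvSet hz, ?_⟩⟩
  intro i
  rw [hF i]
  exact tconvSet_mono (fun v hv => hv.2 i) hz

theorem TropConvex.image_succAbove {M : Set (Fin (d + 1) → STrop)} (hM : TropConvex M)
    (k : Fin (d + 1)) : TropConvex ((fun x (j : Fin d) => x (k.succAbove j)) '' M) := by
  obtain ⟨hsig, hsub⟩ := tropConvex_iff.mp hM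
  refine tropConvex_iff.mpr ⟨?_, fun z hz => ?_⟩
  · rintro _ ⟨w, hw, rfl⟩
    exact fun j => hsig w hw _
  obtain ⟨n, B, hB, hz⟩ := mem_tconvSet.mp hz
  choose col hcol hproj using hB
  have hB : B = fun i j => col j (k.succAbove i) := funext₂ fun i j => (congrFun (hproj j) i).symm
  rw [hB] at hz
  obtain ⟨a, ha⟩ := exists_insertNth_mem_tconv (A := fun i j => col j i) k hz
  refine ⟨_, hsub (mem_tconvSet.mpr ⟨n, _, hcol, ha⟩), ?_⟩
  funext j
  exact Fin.insertNth_apply_succAbove _ _ _ _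

end STrop

/-- intersections (within the ambient space 𝕋±^d) of tropically convex
sets are tropically convex, and coordinate projections of tropically convex sets
are tropically convex. -/
theorem intersection_and_projection_convex :
    (∀ (d : ℕ) (ι : Type) (F : ι → Set (Fin d → STrop)),
      (∀ i, STrop.TropConvex (F i)) →
      STrop.TropConvex {v | STrop.isSignedVec v ∧ ∀ i, v ∈ F i}) ∧
    (∀ (d : ℕ) (k : Fin (d + 1)) (M : Set (Fin (d + 1) → STrop)),
      STrop.TropConvex M →
      STrop.TropConvex ((fun x (j : Fin d) => x (k.succAbove j)) '' M)) :=
  ⟨fun _ _ _ hF => STrop.TropConvex.iInter hF, fun _ k _ hM => hM.image_succAbove k⟩
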